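/- In a dagger kernel category, the poset KSub(X) of kernel subobjects of any object X is an orthomodular lattice: for kernels m ≤ n one has m ∨ (m^⊥ ∧ n) = n, where joins are defined by m ∨ n = (m^⊥ ∧ n^⊥)^⊥. -/

import Mathlib

open CategoryTheory Limits

universe v u

class Dagger (C : Type u) [Category.{v} C] [HasZeroMorphisms C] where
  dag : ∀ {X Y : C}, (X ⟶ Y) → (Y ⟶ X)
  dag_dag : ∀ {X Y : C} (f : X ⟶ Y), dag (dag f) = f
  dag_comp : ∀ {X Y Z : C} (f : X ⟶ Y) (g : Y ⟶ Z), dag (f ≫ g) = dag g ≫ dag f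
  dag_id : ∀ (X : C), dag (𝟙 X) = 𝟙 X
  dag_zero : ∀ (X Y : C), dag (0 : X ⟶ Y) = 0

namespace Dagger

variable {C : Type u} [Category.{v} C] [HasZeroMorphisms C] [Dagger C]

/-- `f` is a dagger mono: `f† ∘ f = id`. -/
def DaggerMono {X Y : C} (f : X ⟶ Y) : Prop := f ≫ dag f = 𝟙 X

/-- `f` is a dagger epi: `f ∘ f† = id`. -/
def DaggerEpi {X Y : C} (f : X ⟶ Y) : Prop := dag f ≫ f = 𝟙 Y

/-- `k` is a kernel of `f`. -/
structure IsKer {K X Y : C} (f : X ⟶ Y) (k : K ⟶ X) : Prop where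
  comp_zero : k ≫ f = 0
  lift : ∀ {Z : C} (g : Z ⟶ X), g ≫ f = 0 → ∃! h : Z ⟶ K, h ≫ k = g

/-- `k` is a kernel of `f` which is moreover a dagger mono. -/
def IsDagKer {K X Y : C} (f : X ⟶ Y) (k : K ⟶ X) : Prop :=
  IsKer f k ∧ DaggerMono k

/-- `k` is a (dagger-monic) kernel of some map. -/
def KernelMap {K X : C} (k : K ⟶ X) : Prop :=
  ∃ (Y : C) (f : X ⟶ Y), IsDagKer f k

/-- order of subobjects, by factorisation -/
def SubLE {M N X : C} (m : M ⟶ X) (n : N ⟶ X) : Prop :=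
  ∃ φ : M ⟶ N, φ ≫ n = m

/-- equality of subobjects -/
def SubEq {M N X : C} (m : M ⟶ X) (n : N ⟶ X) : Prop :=
  SubLE m n ∧ SubLE n m

/-- `p` represents the orthocomplement `m^⊥ = ker(m†)` of `m`. -/
def IsOrthoOf {M P X : C} (m : M ⟶ X) (p : P ⟶ X) : Prop :=
  IsDagKer (dag m) p

/-- `w` is the meet (intersection) of the kernels `m` and `n` in `KSub(X)`. -/
def IsMeet {M N W X : C} (m : M ⟶ X) (n : N ⟶ X) (w : W ⟶ X) : Prop :=
  KernelMap w ∧ SubLE w m ∧ SubLE w n ∧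
    ∀ {K : C} (k : K ⟶ X), KernelMap k → SubLE k m → SubLE k n → SubLE k w

/-- `j` is the join `m ∨ n = (m^⊥ ∧ n^⊥)^⊥` in `KSub(X)`. -/
def IsJoin {M N J X : C} (m : M ⟶ X) (n : N ⟶ X) (j : J ⟶ X) : Prop :=
  ∃ (MP NP W : C) (mp : MP ⟶ X) (np : NP ⟶ X) (w : W ⟶ X),
    IsOrthoOf m mp ∧ IsOrthoOf n np ∧ IsMeet mp np w ∧ IsOrthoOf w j

/-- `p` represents the pullback `f⁻¹(n) = ker(coker(n) ∘ f)` of the kernel `n` along `f`. -/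
def IsInvImg {N P X Y : C} (f : X ⟶ Y) (n : N ⟶ Y) (p : P ⟶ X) : Prop :=
  ∃ (NP : C) (np : NP ⟶ Y), IsOrthoOf n np ∧ IsDagKer (f ≫ dag np) p

/-- `i` represents the image `ker(coker(f)) = ker(ker(f†)†)` of `f`. -/
def IsImg {I X Y : C} (f : X ⟶ Y) (i : I ⟶ Y) : Prop :=
  ∃ (K : C) (k : K ⟶ Y), IsDagKer (dag f) k ∧ IsDagKer (dag k) i

/-- zero-mono: `m ∘ f = 0` implies `f = 0`. -/
def ZeroMono {X Y : C} (m : X ⟶ Y) : Prop :=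
  ∀ {Z : C} (f : Z ⟶ X), f ≫ m = 0 → f = 0

/-- zero-epi: `f ∘ e = 0` implies `f = 0`. -/
def ZeroEpi {X Y : C} (e : X ⟶ Y) : Prop :=
  ∀ {Z : C} (f : Y ⟶ Z), e ≫ f = 0 → f = 0

end Dagger

/-- A dagger kernel category: a dagger category with a zero object in which
every morphism has a kernel that is a dagger mono. -/
class DagKerCat (C : Type u) [Category.{v} C] [HasZeroMorphisms C]
    [HasZeroObject C] extends Dagger C where
  hasKer : ∀ {X Y : C} (f : X ⟶ Y), ∃ (K : C) (k : K ⟶ X), Dagger.IsDagKer f k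

/-!
The inequality `m ∨ (m^⊥ ∧ n) ≤ n` only says that a join is a least upper bound. For the converse,
write `m = φ ≫ n` and let `p = φ^⊥ ⊆ N`. Then `p ≫ n` is a kernel below both `m^⊥` and `n`,
hence below `w = m^⊥ ∧ n`. If `v = m^⊥ ∧ w^⊥` is the meet whose orthocomplement is the join,
then `v ≫ n†` vanishes after `φ†` (as `v ≤ m^⊥`), so it factors through `p`, and it vanishes
after `p†` (as `v ≤ w^⊥`); so `v ≫ n† = 0`, i.e. `n ≤ v^⊥`.
-/

namespace Dagger

section Category

variable {C : Type u} [Category.{v} C]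

lemma SubLE.trans {A B D X : C} {a : A ⟶ X} {b : B ⟶ X} {d : D ⟶ X}
    (hab : SubLE a b) (hbd : SubLE b d) : SubLE a d := by
  obtain ⟨φ, rfl⟩ := hab
  obtain ⟨ψ, rfl⟩ := hbd
  exact ⟨φ ≫ ψ, Category.assoc _ _ _⟩

variable [HasZeroMorphisms C]

lemma SubLE.comp_eq_zero {A B X Y : C} {a : A ⟶ X} {b : B ⟶ X} (hab : SubLE a b)
    {f : X ⟶ Y} (hb : b ≫ f = 0) : a ≫ f = 0 := by
  obtain ⟨φ, rfl⟩ := hab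
  rw [Category.assoc, hb, comp_zero]

lemma IsKer.subLE {K A X Y : C} {f : X ⟶ Y} {k : K ⟶ X} (hk : IsKer f k)
    {g : A ⟶ X} (hg : g ≫ f = 0) : SubLE g k :=
  (hk.lift g hg).exists

variable [Dagger C]

lemma comp_dag_eq_zero_comm {A B X : C} {f : A ⟶ X} {g : B ⟶ X} (h : f ≫ dag g = 0) :
    g ≫ dag f = 0 := by
  simpa only [dag_comp, dag_dag, dag_zero] using congrArg dag h

lemma SubLE.comp_dag_eq_zero {A B X Z : C} {a : A ⟶ X} {b : B ⟶ X} (hab : SubLE a b)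
    {x : Z ⟶ X} (hx : x ≫ dag b = 0) : x ≫ dag a = 0 :=
  comp_dag_eq_zero_comm (hab.comp_eq_zero (comp_dag_eq_zero_comm hx))

lemma DaggerMono.comp_dag_self {M X : C} {m : M ⟶ X} (hm : DaggerMono m) :
    m ≫ dag m = 𝟙 M :=
  hm

lemma DaggerMono.comp_comp_dag_comp {A B N X : C} {n : N ⟶ X} (hn : DaggerMono n)
    (a : A ⟶ N) (b : B ⟶ N) : (a ≫ n) ≫ dag (b ≫ n) = a ≫ dag b := by
  rw [dag_comp, Category.assoc, ← Category.assoc n, hn.comp_dag_self, Category.id_comp]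

lemma DaggerMono.comp {K N X : C} {k : K ⟶ N} {n : N ⟶ X} (hk : DaggerMono k)
    (hn : DaggerMono n) : DaggerMono (k ≫ n) :=
  (hn.comp_comp_dag_comp k k).trans hk

lemma DaggerMono.cancel {M X Z : C} {m : M ⟶ X} (hm : DaggerMono m) {y z : Z ⟶ M}
    (h : y ≫ m = z ≫ m) : y = z := by
  simpa only [Category.assoc, hm.comp_dag_self, Category.comp_id]
    using congrArg (· ≫ dag m) h

lemma DaggerMono.eq_zero_of_subLE_of_comp_dag_eq_zero {P X Z : C} {p : P ⟶ X}
    (hp : DaggerMono p) {x : Z ⟶ X} (hxp : SubLE x p) (hx : x ≫ dag p = 0) : x = 0 := by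
  obtain ⟨h, rfl⟩ := hxp
  have : h = 0 := by simpa only [Category.assoc, hp.comp_dag_self, Category.comp_id] using hx
  rw [this, zero_comp]

lemma DaggerMono.comp_dag_comp_of_subLE {N X Z : C} {n : N ⟶ X} (hn : DaggerMono n)
    {x : Z ⟶ X} (hxn : SubLE x n) : (x ≫ dag n) ≫ n = x := by
  obtain ⟨h, rfl⟩ := hxn
  rw [Category.assoc, Category.assoc, ← Category.assoc n, hn.comp_dag_self, Category.id_comp]

lemma IsKer.of_subEq {K L X Y : C} {f : X ⟶ Y} {k : K ⟶ X} {l : L ⟶ X}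
    (hk : IsKer f k) (hkl : SubEq k l) (hl : DaggerMono l) : IsKer f l := by
  obtain ⟨⟨θ, hθ⟩, hlk⟩ := hkl
  refine ⟨hlk.comp_eq_zero hk.comp_zero, fun g hg => ?_⟩
  obtain ⟨h, hh, -⟩ := hk.lift g hg
  have hfac : (h ≫ θ) ≫ l = g := by rw [Category.assoc, hθ, hh]
  exact ⟨h ≫ θ, hfac, fun y hy => hl.cancel (hy.trans hfac.symm)⟩

lemma KernelMap.daggerMono {K X : C} {k : K ⟶ X} (hk : KernelMap k) : DaggerMono k :=
  hk.choose_spec.choose_spec.2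

lemma IsOrthoOf.kernelMap {M P X : C} {m : M ⟶ X} {p : P ⟶ X} (hp : IsOrthoOf m p) :
    KernelMap p :=
  ⟨_, _, hp⟩

lemma IsOrthoOf.comp_dag_eq_zero {M P X : C} {m : M ⟶ X} {p : P ⟶ X} (hp : IsOrthoOf m p) :
    m ≫ dag p = 0 :=
  comp_dag_eq_zero_comm hp.1.comp_zero

lemma IsOrthoOf.subLE_iff {M P K X : C} {m : M ⟶ X} {p : P ⟶ X} (hp : IsOrthoOf m p)
    {k : K ⟶ X} : SubLE k p ↔ k ≫ dag m = 0 :=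
  ⟨fun hk => hk.comp_eq_zero hp.1.comp_zero, hp.1.subLE⟩

lemma ortho_subLE_ortho {A B AP BP X : C} {a : A ⟶ X} {b : B ⟶ X} {ap : AP ⟶ X}
    {bp : BP ⟶ X} (hab : SubLE a b) (ha : IsOrthoOf a ap) (hb : IsOrthoOf b bp) :
    SubLE bp ap :=
  ha.subLE_iff.2 (comp_dag_eq_zero_comm (hab.comp_eq_zero hb.comp_dag_eq_zero))

lemma subLE_ortho_ortho {M P Q X : C} {m : M ⟶ X} {p : P ⟶ X} {q : Q ⟶ X}
    (hp : IsOrthoOf m p) (hq : IsOrthoOf p q) : SubLE m q :=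
  hq.subLE_iff.2 hp.comp_dag_eq_zero

lemma KernelMap.ortho_ortho_subLE {M P Q X : C} {m : M ⟶ X} {p : P ⟶ X} {q : Q ⟶ X}
    (hm : KernelMap m) (hp : IsOrthoOf m p) (hq : IsOrthoOf p q) : SubLE q m := by
  obtain ⟨Y, f, hf, -⟩ := hm
  obtain ⟨s, hs⟩ : SubLE (dag f) p :=
    hp.1.subLE (by rw [← dag_comp, hf.comp_zero, dag_zero])
  refine hf.subLE ?_
  rw [← dag_dag f, ← hs, dag_comp, ← Category.assoc, hq.1.comp_zero, zero_comp]

lemma kernelMap_of_ortho_ortho_subLE {M P Q X : C} {m : M ⟶ X} {p : P ⟶ X} {q : Q ⟶ X}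
    (hm : DaggerMono m) (hp : IsOrthoOf m p) (hq : IsOrthoOf p q) (hqm : SubLE q m) :
    KernelMap m :=
  ⟨_, dag p, hq.1.of_subEq ⟨hqm, subLE_ortho_ortho hp hq⟩ hm, hm⟩

end Category

section DagKerCat

variable {C : Type u} [Category.{v} C] [HasZeroMorphisms C] [HasZeroObject C] [DagKerCat C]

lemma exists_isOrthoOf {M X : C} (m : M ⟶ X) : ∃ (P : C) (p : P ⟶ X), IsOrthoOf m p :=
  DagKerCat.hasKer (dag m)

lemma KernelMap.comp {K N X : C} {k : K ⟶ N} {n : N ⟶ X} (hk : KernelMap k)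
    (hn : KernelMap n) : KernelMap (k ≫ n) := by
  obtain ⟨P, p, hp⟩ := exists_isOrthoOf (k ≫ n)
  obtain ⟨Q, q, hq⟩ := exists_isOrthoOf p
  obtain ⟨NP, np, hnp⟩ := exists_isOrthoOf n
  obtain ⟨NQ, nq, hnq⟩ := exists_isOrthoOf np
  obtain ⟨KP, kp, hkp⟩ := exists_isOrthoOf k
  obtain ⟨KQ, kq, hkq⟩ := exists_isOrthoOf kp
  refine kernelMap_of_ortho_ortho_subLE (hk.daggerMono.comp hn.daggerMono) hp hq ?_
  have hqn : SubLE q n :=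
    (ortho_subLE_ortho (ortho_subLE_ortho ⟨k, rfl⟩ hp hnp) hnq hq).trans
      (hn.ortho_ortho_subLE hnp hnq)
  have hkpn : SubLE (kp ≫ n) p :=
    hp.subLE_iff.2 ((hn.daggerMono.comp_comp_dag_comp kp k).trans hkp.1.comp_zero)
  -- `q = (q ≫ n†) ≫ n`, and `q ≫ n†` lies in `k^⊥⊥ ⊆ k`.
  have hqk : SubLE (q ≫ dag n) k := by
    refine (hkq.subLE_iff.2 ?_).trans (hk.ortho_ortho_subLE hkp hkq)
    rw [Category.assoc, ← dag_comp]
    exact hkpn.comp_dag_eq_zero hq.1.comp_zero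
  obtain ⟨γ, hγ⟩ := hqk
  exact ⟨γ, by rw [← Category.assoc, hγ, hn.daggerMono.comp_dag_comp_of_subLE hqn]⟩

lemma IsJoin.subLE {M W J N X : C} {m : M ⟶ X} {w : W ⟶ X} {j : J ⟶ X} {n : N ⟶ X}
    (hj : IsJoin m w j) (hmn : SubLE m n) (hwn : SubLE w n) (hn : KernelMap n) :
    SubLE j n := by
  obtain ⟨MP, WP, V, mp, wp, v, hmp, hwp, hv, hvj⟩ := hj
  obtain ⟨NP, np, hnp⟩ := exists_isOrthoOf n
  obtain ⟨NQ, nq, hnq⟩ := exists_isOrthoOf np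
  have hnpv : SubLE np v :=
    hv.2.2.2 np hnp.kernelMap (ortho_subLE_ortho hmn hmp hnp) (ortho_subLE_ortho hwn hwp hnp)
  exact (ortho_subLE_ortho hnpv hnq hvj).trans (hn.ortho_ortho_subLE hnp hnq)

lemma subLE_join_ortho_meet {M N X MP W J : C} {m : M ⟶ X} {n : N ⟶ X}
    (hn : KernelMap n) (hmn : SubLE m n) {mp : MP ⟶ X} (hmp : IsOrthoOf m mp)
    {w : W ⟶ X} (hw : IsMeet mp n w) {j : J ⟶ X} (hj : IsJoin m w j) : SubLE n j := by
  obtain ⟨φ, rfl⟩ := hmn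
  obtain ⟨MP', WP, V, mp', wp, v, hmp', hwp, hv, hvj⟩ := hj
  obtain ⟨P, p, hp⟩ := exists_isOrthoOf φ
  have hpm : (p ≫ n) ≫ dag (φ ≫ n) = 0 :=
    (hn.daggerMono.comp_comp_dag_comp p φ).trans hp.1.comp_zero
  have hpw : SubLE (p ≫ n) w :=
    hw.2.2.2 _ (hp.kernelMap.comp hn) (hmp.subLE_iff.2 hpm) ⟨p, rfl⟩
  have hvm : v ≫ dag (φ ≫ n) = 0 := hv.2.1.comp_eq_zero hmp'.1.comp_zero
  have hvw : v ≫ dag w = 0 := hv.2.2.1.comp_eq_zero hwp.1.comp_zero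
  have hvn : v ≫ dag n = 0 := by
    refine hp.2.eq_zero_of_subLE_of_comp_dag_eq_zero (hp.subLE_iff.2 ?_) ?_
    · rw [Category.assoc, ← dag_comp]
      exact hvm
    · rw [Category.assoc, ← dag_comp]
      exact hpw.comp_dag_eq_zero hvw
  exact hvj.subLE_iff.2 (comp_dag_eq_zero_comm hvn)

end DagKerCat

end Dagger

open Dagger in
theorem stmt5_general {C : Type u} [Category.{v} C] [HasZeroMorphisms C] [HasZeroObject C]
    [DagKerCat C] {M N X MP W J : C} (m : M ⟶ X) (n : N ⟶ X)
    (hn : KernelMap n) (hmn : SubLE m n)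
    (mp : MP ⟶ X) (hmp : IsOrthoOf m mp)
    (w : W ⟶ X) (hw : IsMeet mp n w)
    (j : J ⟶ X) (hj : IsJoin m w j) :
    SubEq j n :=
  ⟨hj.subLE hmn hw.2.2.1 hn, subLE_join_ortho_meet hn hmn hmp hw hj⟩

open Dagger in
/-- orthomodularity of `KSub(X)`: for kernels `m ≤ n` one has
`m ∨ (m^⊥ ∧ n) = n`, joins being defined by `m ∨ n = (m^⊥ ∧ n^⊥)^⊥`. -/
theorem stmt5 {C : Type u} [Category.{v} C] [HasZeroMorphisms C] [HasZeroObject C]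
    [DagKerCat C] {M N X MP W J : C} (m : M ⟶ X) (n : N ⟶ X)
    (hm : KernelMap m) (hn : KernelMap n) (hmn : SubLE m n)
    (mp : MP ⟶ X) (hmp : IsOrthoOf m mp)
    (w : W ⟶ X) (hw : IsMeet mp n w)
    (j : J ⟶ X) (hj : IsJoin m w j) :
    SubEq j n :=
  stmt5_general m n hn hmn mp hmp w hw j hj
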